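/- arXiv:2508.14385 — 7 statements merged into one kernel-verified Lean document; each statement's English description precedes it below -/
import Mathlib

section
/- Let X be a nonempty type (state space), A a nonempty finite type (action space), and γ a real number with 0 < γ < 1. Let p and p̄ be two transition kernels on X, let c_max ≥ 0, and let ĉ : X → A → ℝ satisfy 0 ≤ ĉ x a ≤ c_max for all x, a. Suppose there is a real α such that for all x and a, ∑_{x'} |p x a x' − p̄ x a x'| ≤ α. If J is a bounded Bellman solution for (ĉ, p) and J̄ is a bounded Bellman solution for (ĉ, p̄), then for every x, |J̄ x − J x| ≤ γ·α·c_max/(1−γ)². -/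
open scoped BigOperators

/-- A transition kernel on state space `X` with action space `A`:
for every state-action pair the next-state weights are nonnegative,
finitely supported, and sum to one. -/
def IsKernel {X A : Type*} (p : X → A → X → ℝ) : Prop :=
  ∀ x a, (∀ x', 0 ≤ p x a x') ∧ (Function.support (p x a)).Finite ∧ (∑ᶠ x', p x a x') = 1

/-- `J` is a bounded Bellman solution for cost `c`, kernel `p`, discount `γ`. -/
def IsBellman {X A : Type*} [Fintype A] [Nonempty A] (γ : ℝ)
    (c : X → A → ℝ) (p : X → A → X → ℝ) (J : X → ℝ) : Prop :=
  (∃ M, ∀ x, |J x| ≤ M) ∧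
  ∀ x, J x = Finset.univ.inf' Finset.univ_nonempty
      (fun a => c x a + γ * ∑ᶠ x', p x a x' * J x')

lemma ksum_abs_le {X A : Type*} {p : X → A → X → ℝ} (hp : IsKernel p)
    (x : X) (a : A) {g : X → ℝ} {M : ℝ} (hg : ∀ x', |g x'| ≤ M) :
    |∑ᶠ x', p x a x' * g x'| ≤ M := by
  obtain ⟨hnn, hfin, hsum⟩ := hp x a
  have h1 : (∑ᶠ x', p x a x') = ∑ x' ∈ hfin.toFinset, p x a x' :=
    finsum_eq_sum_of_support_subset _ (by simp)
  have h2 : (∑ᶠ x', p x a x' * g x') = ∑ x' ∈ hfin.toFinset, p x a x' * g x' := by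
    apply finsum_eq_sum_of_support_subset
    intro x' hx'
    have : p x a x' ≠ 0 := fun h => hx' (by simp [Function.mem_support, h])
    simpa [Function.mem_support] using this
  rw [h2]
  calc |∑ x' ∈ hfin.toFinset, p x a x' * g x'|
      ≤ ∑ x' ∈ hfin.toFinset, |p x a x' * g x'| := Finset.abs_sum_le_sum_abs _ _
    _ ≤ ∑ x' ∈ hfin.toFinset, p x a x' * M := by
        apply Finset.sum_le_sum
        intro i _
        rw [abs_mul, abs_of_nonneg (hnn i)]
        exact mul_le_mul_of_nonneg_left (hg i) (hnn i)
    _ = (∑ x' ∈ hfin.toFinset, p x a x') * M := by rw [Finset.sum_mul]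
    _ = M := by rw [← h1, hsum, one_mul]

lemma bellman_abs_bound {X A : Type*} [Nonempty X] [Fintype A] [Nonempty A]
    {γ : ℝ} (hγ0 : 0 < γ) (hγ1 : γ < 1)
    {p : X → A → X → ℝ} (hp : IsKernel p)
    {cmax : ℝ} (hcmax : 0 ≤ cmax)
    {c : X → A → ℝ} (hc : ∀ x a, 0 ≤ c x a ∧ c x a ≤ cmax)
    {J : X → ℝ} (hJ : IsBellman γ c p J) :
    ∀ x, |J x| ≤ cmax / (1 - γ) := by
  obtain ⟨⟨M0, hM0⟩, hbell⟩ := hJ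
  set K := sSup (Set.range fun x => |J x|) with hK
  have hbdd : BddAbove (Set.range fun x => |J x|) :=
    ⟨M0, by rintro _ ⟨x, rfl⟩; exact hM0 x⟩
  have hKle : ∀ x, |J x| ≤ K := fun x => le_csSup hbdd ⟨x, rfl⟩
  have hKnn : 0 ≤ K := le_trans (abs_nonneg _) (hKle (Classical.arbitrary X))
  have hstep : ∀ x, |J x| ≤ cmax + γ * K := by
    intro x
    rw [hbell x, abs_le]
    constructor
    · apply Finset.le_inf'
      intro a _
      have h1 := (abs_le.mp (ksum_abs_le hp x a hKle)).1
      nlinarith [(hc x a).1, hγ0.le]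
    · obtain ⟨a⟩ := (inferInstance : Nonempty A)
      refine le_trans (Finset.inf'_le _ (Finset.mem_univ a)) ?_
      have h1 := (abs_le.mp (ksum_abs_le hp x a hKle)).2
      nlinarith [(hc x a).2, hγ0.le]
  have hKb : K ≤ cmax + γ * K := by
    apply csSup_le (Set.range_nonempty _)
    rintro _ ⟨x, rfl⟩; exact hstep x
  have h1γ : 0 < 1 - γ := by linarith
  intro x
  refine le_trans (hKle x) ?_
  rw [le_div_iff₀ h1γ]; nlinarith

lemma abs_inf'_sub_inf'_le {A : Type*} [Fintype A] [Nonempty A] (F G : A → ℝ) (K : ℝ)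
    (h : ∀ a, |F a - G a| ≤ K) :
    |Finset.univ.inf' Finset.univ_nonempty F - Finset.univ.inf' Finset.univ_nonempty G| ≤ K := by
  obtain ⟨a, _, ha⟩ := Finset.exists_mem_eq_inf' (Finset.univ_nonempty) G
  obtain ⟨b, _, hb⟩ := Finset.exists_mem_eq_inf' (Finset.univ_nonempty) F
  rw [abs_le]
  constructor
  · have h1 : Finset.univ.inf' Finset.univ_nonempty G ≤ G b :=
      Finset.inf'_le _ (Finset.mem_univ b)
    have h2 := (abs_le.mp (h b)).1
    rw [hb]; linarith
  · have h1 : Finset.univ.inf' Finset.univ_nonempty F ≤ F a :=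
      Finset.inf'_le _ (Finset.mem_univ a)
    have h2 := (abs_le.mp (h a)).2
    rw [ha]; linarith

/-- Misspecification error bound. -/
theorem misspecification_error_bound
    {X A : Type*} [Nonempty X] [Fintype A] [Nonempty A]
    (γ : ℝ) (hγ0 : 0 < γ) (hγ1 : γ < 1)
    (p pbar : X → A → X → ℝ) (hp : IsKernel p) (hpbar : IsKernel pbar)
    (cmax : ℝ) (hcmax : 0 ≤ cmax)
    (c : X → A → ℝ) (hc : ∀ x a, 0 ≤ c x a ∧ c x a ≤ cmax)
    (α : ℝ) (hα : ∀ x a, (∑ᶠ x', |p x a x' - pbar x a x'|) ≤ α)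
    (J Jbar : X → ℝ)
    (hJ : IsBellman γ c p J) (hJbar : IsBellman γ c pbar Jbar) :
    ∀ x, |Jbar x - J x| ≤ γ * α * cmax / (1 - γ) ^ 2 := by
  classical
  have h1γ : 0 < 1 - γ := by linarith
  set M := cmax / (1 - γ) with hM
  have hMnn : 0 ≤ M := div_nonneg hcmax h1γ.le
  have hJle : ∀ x, |J x| ≤ M := bellman_abs_bound hγ0 hγ1 hp hcmax hc hJ
  have hJble : ∀ x, |Jbar x| ≤ M := bellman_abs_bound hγ0 hγ1 hpbar hcmax hc hJbar
  have hαnn : 0 ≤ α :=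
    le_trans (finsum_nonneg fun x' => abs_nonneg _)
      (hα (Classical.arbitrary X) (Classical.arbitrary A))
  have hbdd : BddAbove (Set.range fun x => |Jbar x - J x|) := by
    refine ⟨2 * M, ?_⟩
    rintro _ ⟨x, rfl⟩
    have : |Jbar x - J x| ≤ |Jbar x| + |J x| := by
      rw [sub_eq_add_neg]
      exact (abs_add_le _ _).trans (by rw [abs_neg])
    linarith [hJle x, hJble x]
  set D := sSup (Set.range fun x => |Jbar x - J x|) with hD
  have hDle : ∀ x, |Jbar x - J x| ≤ D := fun x => le_csSup hbdd ⟨x, rfl⟩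
  have hDnn : 0 ≤ D := le_trans (abs_nonneg _) (hDle (Classical.arbitrary X))
  -- key per-state-action bound
  have key : ∀ x a,
      |(∑ᶠ x', pbar x a x' * Jbar x') - ∑ᶠ x', p x a x' * J x'| ≤ D + α * M := by
    intro x a
    obtain ⟨hnn, hfin, hsum⟩ := hp x a
    obtain ⟨hnn', hfin', hsum'⟩ := hpbar x a
    set S := hfin.toFinset ∪ hfin'.toFinset with hS
    have hsubp : Function.support (p x a) ⊆ ↑S := by
      intro y hy; simp [hS, Function.mem_support.mp hy]
    have hsubp' : Function.support (pbar x a) ⊆ ↑S := by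
      intro y hy; simp [hS, Function.mem_support.mp hy]
    have e1 : (∑ᶠ x', p x a x' * J x') = ∑ x' ∈ S, p x a x' * J x' := by
      apply finsum_eq_sum_of_support_subset
      intro y hy
      exact hsubp (fun h => hy (by simp [Function.mem_support.mp, h]))
    have e2 : (∑ᶠ x', pbar x a x' * Jbar x') = ∑ x' ∈ S, pbar x a x' * Jbar x' := by
      apply finsum_eq_sum_of_support_subset
      intro y hy
      exact hsubp' (fun h => hy (by simp [h]))
    have e2' : (∑ᶠ x', pbar x a x' * (Jbar x' - J x')) = ∑ x' ∈ S, pbar x a x' * (Jbar x' - J x') := by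
      apply finsum_eq_sum_of_support_subset
      intro y hy
      exact hsubp' (fun h => hy (by simp [h]))
    have e3 : (∑ᶠ x', |p x a x' - pbar x a x'|) = ∑ x' ∈ S, |p x a x' - pbar x a x'| := by
      apply finsum_eq_sum_of_support_subset
      intro y hy
      simp only [Function.mem_support, ne_eq, abs_eq_zero, sub_eq_zero] at hy
      by_cases h : p x a y = 0
      · exact hsubp' fun h' => hy (by rw [h, h'])
      · exact hsubp h
    have split : (∑ᶠ x', pbar x a x' * Jbar x') - ∑ᶠ x', p x a x' * J x'
        = (∑ᶠ x', pbar x a x' * (Jbar x' - J x')) + ∑ x' ∈ S, (pbar x a x' - p x a x') * J x' := by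
      rw [e1, e2, e2', ← Finset.sum_add_distrib, ← Finset.sum_sub_distrib]
      apply Finset.sum_congr rfl
      intro i _; ring
    rw [split]
    refine le_trans (abs_add_le _ _) (add_le_add ?_ ?_)
    · exact ksum_abs_le hpbar x a hDle
    · calc |∑ x' ∈ S, (pbar x a x' - p x a x') * J x'|
          ≤ ∑ x' ∈ S, |(pbar x a x' - p x a x') * J x'| := Finset.abs_sum_le_sum_abs _ _
        _ ≤ ∑ x' ∈ S, |pbar x a x' - p x a x'| * M := by
            apply Finset.sum_le_sum
            intro i _
            rw [abs_mul]
            exact mul_le_mul_of_nonneg_left (hJle i) (abs_nonneg _)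
        _ = (∑ x' ∈ S, |p x a x' - pbar x a x'|) * M := by
            rw [Finset.sum_mul]
            apply Finset.sum_congr rfl
            intro i _; rw [abs_sub_comm]
        _ ≤ α * M := by
            rw [← e3]
            exact mul_le_mul_of_nonneg_right (hα x a) hMnn
  -- contraction step
  have hstep : ∀ x, |Jbar x - J x| ≤ γ * (D + α * M) := by
    intro x
    rw [hJbar.2 x, hJ.2 x]
    apply abs_inf'_sub_inf'_le
    intro a
    have : (c x a + γ * ∑ᶠ x', pbar x a x' * Jbar x') - (c x a + γ * ∑ᶠ x', p x a x' * J x')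
        = γ * ((∑ᶠ x', pbar x a x' * Jbar x') - ∑ᶠ x', p x a x' * J x') := by ring
    rw [this, abs_mul, abs_of_pos hγ0]
    exact mul_le_mul_of_nonneg_left (key x a) hγ0.le
  have hDstep : D ≤ γ * (D + α * M) := by
    apply csSup_le (Set.range_nonempty _)
    rintro _ ⟨x, rfl⟩; exact hstep x
  have hMc : M * (1 - γ) = cmax := div_mul_cancel₀ _ h1γ.ne'
  intro x
  refine le_trans (hDle x) ?_
  rw [le_div_iff₀ (by positivity)]
  have h2 : D * (1 - γ) ≤ γ * α * M := by nlinarith [hDstep]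
  have h3 := mul_le_mul_of_nonneg_right h2 h1γ.le
  have h4 : γ * α * M * (1 - γ) = γ * α * cmax := by rw [mul_assoc, hMc]
  have h5 : D * (1 - γ) ^ 2 = D * (1 - γ) * (1 - γ) := by ring
  linarith [h3, h4, h5]
end

section
/- Let X be a nonempty type, A a nonempty finite type, γ a real with 0 < γ < 1, ĉ : X → A → ℝ a bounded cost function, and p a transition kernel on X. Let Φ be an aggregation map on X with representative set X̃ = range Φ, and let V be a quantized Bellman solution for (ĉ, p, Φ). Let J̄ be a bounded Bellman solution for (ĉ, p), and let ε ≥ 0 satisfy: for all x, x' with Φ x = Φ x', |J̄ x − J̄ x'| ≤ ε. Then for every x, |V (Φ x) − J̄ x| ≤ ε/(1−γ). -/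
open scoped BigOperators

/-- An aggregation map: finite range and idempotent. -/
def IsAggregation {X : Type*} (Φ : X → X) : Prop :=
  (Set.range Φ).Finite ∧ Φ ∘ Φ = Φ

/-- `V` is a quantized Bellman solution for `(c, p, Φ)`: on the set of
representative states (the range of `Φ`), `V` satisfies the Bellman equation
of the quantized MDP whose kernel is `p̂ y a y' = ∑_{x' : Φ x' = y'} p y a x'`. -/
def IsQuantBellman {X A : Type*} [Fintype A] [Nonempty A] (γ : ℝ)
    (c : X → A → ℝ) (p : X → A → X → ℝ) (Φ : X → X) (V : X → ℝ) : Prop :=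
  ∀ y ∈ Set.range Φ, V y = Finset.univ.inf' Finset.univ_nonempty
      (fun a => c y a + γ * ∑ᶠ (y') (_ : y' ∈ Set.range Φ),
        (∑ᶠ (x') (_ : Φ x' = y'), p y a x') * V y')

lemma abs_inf'_sub_inf'_le_s1 {α : Type*} (s : Finset α) (hs : s.Nonempty)
    (f g : α → ℝ) (t : ℝ) (h : ∀ a ∈ s, |f a - g a| ≤ t) :
    |s.inf' hs f - s.inf' hs g| ≤ t := by
  rw [abs_sub_le_iff]
  constructor
  · obtain ⟨a, ha, hga⟩ := s.exists_mem_eq_inf' hs g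
    have h1 : s.inf' hs f ≤ f a := Finset.inf'_le f ha
    have h2 := (abs_sub_le_iff.1 (h a ha)).1
    linarith
  · obtain ⟨a, ha, hfa⟩ := s.exists_mem_eq_inf' hs f
    have h1 : s.inf' hs g ≤ g a := Finset.inf'_le g ha
    have h2 := (abs_sub_le_iff.1 (h a ha)).2
    linarith

/-- Approximation error bound for belief quantization. -/
theorem approximation_error_bound
    {X A : Type*} [Nonempty X] [Fintype A] [Nonempty A]
    (γ : ℝ) (hγ0 : 0 < γ) (hγ1 : γ < 1)
    (c : X → A → ℝ) (hc : ∃ M, ∀ x a, |c x a| ≤ M)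
    (p : X → A → X → ℝ) (hp : IsKernel p)
    (Φ : X → X) (hΦ : IsAggregation Φ)
    (V : X → ℝ) (hV : IsQuantBellman γ c p Φ V)
    (Jbar : X → ℝ) (hJbar : IsBellman γ c p Jbar)
    (ε : ℝ) (hε0 : 0 ≤ ε)
    (hε : ∀ x x', Φ x = Φ x' → |Jbar x - Jbar x'| ≤ ε) :
    ∀ x, |V (Φ x) - Jbar x| ≤ ε / (1 - γ) := by
  classical
  obtain ⟨hfin, hidem⟩ := hΦ
  have hid : ∀ x, Φ (Φ x) = Φ x := fun x => congrFun hidem x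
  set Xt : Finset X := hfin.toFinset with hXt
  have hmemXt : ∀ z, Φ z ∈ Xt := fun z => by
    simp [hXt, Set.Finite.mem_toFinset]
  have hXtne : Xt.Nonempty := ⟨Φ Classical.ofNonempty, hmemXt _⟩
  set D : ℝ := Xt.sup' hXtne (fun y => |V y - Jbar y|) with hD
  have hDle : ∀ y ∈ Xt, |V y - Jbar y| ≤ D := by
    intro y hy; rw [hD]; exact Finset.le_sup' (fun y => |V y - Jbar y|) hy
  have hD0 : 0 ≤ D :=
    le_trans (abs_nonneg _) (hDle _ (hmemXt Classical.ofNonempty))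
  -- pointwise bound on states plus representatives
  have hpt : ∀ x', |V (Φ x') - Jbar x'| ≤ D + ε := by
    intro x'
    have h1 : |V (Φ x') - Jbar (Φ x')| ≤ D := hDle _ (hmemXt x')
    have h2 : |Jbar (Φ x') - Jbar x'| ≤ ε := hε (Φ x') x' (hid x')
    calc |V (Φ x') - Jbar x'|
        ≤ |V (Φ x') - Jbar (Φ x')| + |Jbar (Φ x') - Jbar x'| := abs_sub_le _ _ _
      _ ≤ D + ε := add_le_add h1 h2
  -- key contraction bound on representatives
  have key : ∀ y ∈ Xt, |V y - Jbar y| ≤ γ * (D + ε) := by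
    intro y hy
    have hyr : y ∈ Set.range Φ := by
      have := hy; rw [hXt, Set.Finite.mem_toFinset] at this; exact this
    rw [hV y hyr, hJbar.2 y]
    apply abs_inf'_sub_inf'_le_s1
    intro a _
    obtain ⟨hpos, hsupp, hsum⟩ := hp y a
    set S : Finset X := hsupp.toFinset with hS
    have hSsupp : Function.support (p y a) ⊆ (S : Set X) := by
      simp [hS, Set.Finite.coe_toFinset]
    -- total mass over S is 1
    have hmass : ∑ x' ∈ S, p y a x' = 1 := by
      rw [← finsum_eq_finset_sum_of_support_subset _ hSsupp]; exact hsum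
    -- rewrite quantized sum as a sum over S
    have hq : (∑ᶠ (y') (_ : y' ∈ Set.range Φ),
        (∑ᶠ (x') (_ : Φ x' = y'), p y a x') * V y')
        = ∑ x' ∈ S, p y a x' * V (Φ x') := by
      have step1 : (∑ᶠ (y') (_ : y' ∈ Set.range Φ),
          (∑ᶠ (x') (_ : Φ x' = y'), p y a x') * V y')
          = ∑ y' ∈ Xt, (∑ᶠ (x') (_ : Φ x' = y'), p y a x') * V y' :=
        finsum_mem_eq_finite_toFinset_sum _ hfin
      have step2 : ∀ y' : X, (∑ᶠ (x') (_ : Φ x' = y'), p y a x')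
          = ∑ x' ∈ S.filter (fun x' => Φ x' = y'), p y a x' := by
        intro y'
        have : (∑ᶠ (x') (_ : x' ∈ {x' | Φ x' = y'}), p y a x')
            = ∑ x' ∈ Finset.filter (· ∈ {x' | Φ x' = y'}) hsupp.toFinset, p y a x' :=
          finsum_mem_eq_sum_filter _ _ hsupp
        simpa [hS, Set.mem_setOf_eq] using this
      rw [step1]
      have step3 : ∑ y' ∈ Xt, (∑ x' ∈ S.filter (fun x' => Φ x' = y'), p y a x') * V y'
          = ∑ x' ∈ S, p y a x' * V (Φ x') := by
        rw [← Finset.sum_fiberwise_of_maps_to (g := Φ)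
          (fun x' _ => hmemXt x') (fun x' => p y a x' * V (Φ x'))]
        refine Finset.sum_congr rfl fun y' _ => ?_
        rw [Finset.sum_mul]
        refine Finset.sum_congr rfl fun x' hx' => ?_
        rw [(Finset.mem_filter.1 hx').2]
      rw [← step3]
      exact Finset.sum_congr rfl fun y' _ => by rw [step2]
    -- rewrite exact sum as a sum over S
    have hj : (∑ᶠ x', p y a x' * Jbar x') = ∑ x' ∈ S, p y a x' * Jbar x' := by
      refine finsum_eq_finset_sum_of_support_subset _ ?_
      refine subset_trans ?_ hSsupp
      intro x' hx'
      simp only [Function.mem_support] at hx' ⊢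
      intro h0; exact hx' (by rw [h0, zero_mul])
    rw [hq, hj]
    have hsub : ∑ x' ∈ S, p y a x' * (V (Φ x') - Jbar x')
        = (∑ x' ∈ S, p y a x' * V (Φ x')) - ∑ x' ∈ S, p y a x' * Jbar x' := by
      rw [← Finset.sum_sub_distrib]
      exact Finset.sum_congr rfl fun x' _ => by ring
    have : c y a + γ * ∑ x' ∈ S, p y a x' * V (Φ x')
        - (c y a + γ * ∑ x' ∈ S, p y a x' * Jbar x')
        = γ * ∑ x' ∈ S, p y a x' * (V (Φ x') - Jbar x') := by
      rw [hsub]; ring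
    rw [this, abs_mul, abs_of_pos hγ0]
    refine mul_le_mul_of_nonneg_left ?_ hγ0.le
    calc |∑ x' ∈ S, p y a x' * (V (Φ x') - Jbar x')|
        ≤ ∑ x' ∈ S, |p y a x' * (V (Φ x') - Jbar x')| := Finset.abs_sum_le_sum_abs _ _
      _ ≤ ∑ x' ∈ S, p y a x' * (D + ε) := by
          refine Finset.sum_le_sum fun x' _ => ?_
          rw [abs_mul, abs_of_nonneg (hpos x')]
          exact mul_le_mul_of_nonneg_left (hpt x') (hpos x')
      _ = D + ε := by rw [← Finset.sum_mul, hmass, one_mul]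
  -- conclude D ≤ γ ε / (1 - γ)
  have hDbound : D ≤ γ * (D + ε) := by
    obtain ⟨y, hy, hDy⟩ := Finset.exists_mem_eq_sup' hXtne (fun y => |V y - Jbar y|)
    calc D = |V y - Jbar y| := hDy
      _ ≤ γ * (D + ε) := key y hy
  have h1γ : 0 < 1 - γ := by linarith
  intro x
  have hb : |V (Φ x) - Jbar x| ≤ D + ε := hpt x
  have hfinal : D + ε ≤ ε / (1 - γ) := by
    rw [le_div_iff₀ h1γ]
    nlinarith
  linarith
end

section
/- Let n ≥ 1 and r ≥ 1 be natural numbers, and let b : Fin n → ℝ belong to the standard simplex (b i ≥ 0 for all i and ∑ i, b i = 1). Then there exists β : Fin n → ℕ with ∑ i, β i = r and |b i − (β i : ℝ)/r| ≤ 1/r for every i. -/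
open scoped BigOperators

/-- Any point of the standard simplex can be rounded to a grid point of
resolution `r` with coordinatewise error at most `1/r`. -/
theorem simplex_grid_rounding
    (n r : ℕ) (hn : 1 ≤ n) (hr : 1 ≤ r)
    (b : Fin n → ℝ) (hb0 : ∀ i, 0 ≤ b i) (hb1 : ∑ i, b i = 1) :
    ∃ β : Fin n → ℕ, (∑ i, β i = r) ∧ ∀ i, |b i - (β i : ℝ) / (r : ℝ)| ≤ 1 / (r : ℝ) := by
  have hrpos : (0:ℝ) < r := by exact_mod_cast hr
  set f : Fin n → ℕ := fun i => ⌊(r:ℝ) * b i⌋₊ with hf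
  have hfle : ∀ i, (f i : ℝ) ≤ (r:ℝ) * b i := fun i =>
    Nat.floor_le (mul_nonneg hrpos.le (hb0 i))
  have hflt : ∀ i, (r:ℝ) * b i < (f i : ℝ) + 1 := fun i => Nat.lt_floor_add_one _
  have hsum_le : ∑ i, f i ≤ r := by
    have : ((∑ i, f i : ℕ) : ℝ) ≤ (r:ℝ) := by
      push_cast
      calc ∑ i, (f i : ℝ) ≤ ∑ i, (r:ℝ) * b i := Finset.sum_le_sum fun i _ => hfle i
        _ = (r:ℝ) * 1 := by rw [← Finset.mul_sum, hb1]
        _ = r := mul_one _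
    exact_mod_cast this
  have hsum_ge : r ≤ ∑ i, f i + n := by
    have : (r:ℝ) ≤ ((∑ i, f i : ℕ) : ℝ) + n := by
      have h1 : (r:ℝ) * 1 = ∑ i, (r:ℝ) * b i := by rw [← Finset.mul_sum, hb1]
      have h2 : ∑ i, (r:ℝ) * b i ≤ ∑ i, ((f i : ℝ) + 1) :=
        Finset.sum_le_sum fun i _ => (hflt i).le
      have h3 : ∑ i, ((f i : ℝ) + 1) = (∑ i, (f i : ℝ)) + n := by
        rw [Finset.sum_add_distrib]; simp
      push_cast
      calc (r:ℝ) = ∑ i, (r:ℝ) * b i := by rw [← h1, mul_one]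
        _ ≤ _ := h2.trans_eq h3
    exact_mod_cast this
  set d : ℕ := r - ∑ i, f i with hd
  have hdn : d ≤ n := by omega
  refine ⟨fun i => f i + if (i:ℕ) < d then 1 else 0, ?_, ?_⟩
  · have hcard : (Finset.univ.filter fun i : Fin n => (i:ℕ) < d).card = d := by
      have : (Finset.univ.filter fun i : Fin n => (i:ℕ) < d)
          = Finset.map (Fin.castLEEmb hdn) Finset.univ := by
        ext i
        simp [Fin.castLEEmb, Fin.castLE, Fin.ext_iff]
        constructor
        · intro hi; exact ⟨⟨i, hi⟩, rfl⟩
        · rintro ⟨a, ha⟩; exact ha ▸ a.2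
      simp [this]
    rw [Finset.sum_add_distrib, ← Finset.card_filter]
    rw [hcard]
    omega
  · intro i
    have hfi := hfle i
    have hfi' := hflt i
    have key : ∀ c : ℝ, |(r:ℝ) * b i - c| ≤ 1 → |b i - c / (r:ℝ)| ≤ 1 / (r:ℝ) := by
      intro c h
      have heq : b i - c / (r:ℝ) = ((r:ℝ) * b i - c) / (r:ℝ) := by field_simp
      rw [heq, abs_div, abs_of_pos hrpos]
      gcongr
    by_cases hi : (i:ℕ) < d
    · simp only [hi, if_true]
      have : ((f i + 1 : ℕ) : ℝ) = (f i : ℝ) + 1 := by push_cast; ring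
      rw [this]
      apply key
      rw [abs_le]
      constructor <;> linarith
    · simp only [hi, if_false, Nat.add_zero]
      apply key
      rw [abs_le]
      constructor <;> linarith
end

section
/- Let n ≥ 1 and r ≥ 1 be natural numbers, let B be the standard simplex in Fin n → ℝ with the sup-norm, let G_r be the representative-belief grid of resolution r, and let Φ_r : B → B be a nearest-neighbor quantization map of resolution r. If b, b' ∈ B satisfy Φ_r b = Φ_r b', then ‖b − b'‖∞ ≤ 2·n/r. -/
open scoped BigOperators

/-- The standard simplex in `Fin n → ℝ` (with the sup-norm of the Pi type). -/
def Simplex (n : ℕ) : Set (Fin n → ℝ) :=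
  {b | (∀ i, 0 ≤ b i) ∧ ∑ i, b i = 1}

/-- The representative-belief grid of resolution `r`. -/
def Grid (n r : ℕ) : Set ↥(Simplex n) :=
  {b | ∀ i, ∃ k : ℕ, (b : Fin n → ℝ) i = (k : ℝ) / (r : ℝ)}

/-- `Φ` is a nearest-neighbor quantization map of resolution `r`. -/
def IsNearestNeighbor (n r : ℕ) (Φ : ↥(Simplex n) → ↥(Simplex n)) : Prop :=
  ∀ b : ↥(Simplex n), Φ b ∈ Grid n r ∧
    ∀ g ∈ Grid n r, ‖(b : Fin n → ℝ) - (Φ b : Fin n → ℝ)‖ ≤ ‖(b : Fin n → ℝ) - (g : Fin n → ℝ)‖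

lemma exists_grid_close (m r : ℕ) (hr : 1 ≤ r) (b : ↥(Simplex (m+1))) :
    ∃ g ∈ Grid (m+1) r,
      ‖(b : Fin (m+1) → ℝ) - (g : Fin (m+1) → ℝ)‖ ≤ ((m : ℝ) + 1) / r := by
  have hrpos : (0:ℝ) < r := by exact_mod_cast hr
  obtain ⟨hb0, hb1⟩ := b.2
  set f : Fin (m+1) → ℕ := fun i => ⌊(r:ℝ) * b.1 i⌋₊ with hf
  set E := Finset.univ.erase (Fin.last m) with hE
  set S := ∑ j ∈ E, f j with hS
  have hfle : ∀ i, (f i : ℝ) ≤ (r:ℝ) * b.1 i :=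
    fun i => Nat.floor_le (mul_nonneg hrpos.le (hb0 i))
  have hflt : ∀ i, (r:ℝ) * b.1 i < (f i : ℝ) + 1 := fun i => Nat.lt_floor_add_one _
  have hSr : (S:ℝ) ≤ r := by
    have h1 : (S:ℝ) = ∑ j ∈ E, (f j : ℝ) := by push_cast [hS]; ring
    have h2 : ∑ j ∈ E, (f j : ℝ) ≤ ∑ j ∈ E, (r:ℝ) * b.1 j :=
      Finset.sum_le_sum fun j _ => hfle j
    have h3 : ∑ j ∈ E, (r:ℝ) * b.1 j ≤ ∑ j, (r:ℝ) * b.1 j :=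
      Finset.sum_le_sum_of_subset_of_nonneg (Finset.subset_univ E)
        (fun j _ _ => mul_nonneg hrpos.le (hb0 j))
    have h4 : ∑ j, (r:ℝ) * b.1 j = r := by rw [← Finset.mul_sum, hb1, mul_one]
    linarith
  have hSr' : S ≤ r := by exact_mod_cast hSr
  set k : Fin (m+1) → ℕ := fun i => if i = Fin.last m then r - S else f i with hk
  have hkE : ∀ j ∈ E, k j = f j := by
    intro j hj
    have : j ≠ Fin.last m := (Finset.mem_erase.mp hj).1
    simp [hk, this]
  have hksum : ∑ i, k i = r := by
    rw [← Finset.add_sum_erase _ k (Finset.mem_univ (Fin.last m)), ← hE,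
      Finset.sum_congr rfl hkE, ← hS]
    simp [hk, Nat.sub_add_cancel hSr']
  set g : Fin (m+1) → ℝ := fun i => (k i : ℝ) / r with hg
  have hgS : g ∈ Simplex (m+1) := by
    constructor
    · intro i; positivity
    · rw [← Finset.sum_div]
      have : ∑ i, (k i : ℝ) = (r:ℝ) := by exact_mod_cast congrArg (Nat.cast : ℕ → ℝ) hksum
      rw [this, div_self hrpos.ne']
  refine ⟨⟨g, hgS⟩, fun i => ⟨k i, rfl⟩, ?_⟩
  have hbE : b.1 (Fin.last m) = 1 - ∑ j ∈ E, b.1 j := by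
    rw [← hb1, ← Finset.add_sum_erase _ b.1 (Finset.mem_univ (Fin.last m)), ← hE]
    ring
  have hlow : ∀ i, 0 ≤ b.1 i - (f i : ℝ)/r := by
    intro i
    rw [sub_nonneg, div_le_iff₀ hrpos]
    linarith [hfle i]
  have hup : ∀ i, b.1 i - (f i : ℝ)/r ≤ 1/r := by
    intro i
    have : b.1 i ≤ ((f i : ℝ) + 1)/r := by
      rw [le_div_iff₀ hrpos]; linarith [hflt i]
    rw [add_div] at this
    linarith
  have hmain : ∀ i, |b.1 i - g i| ≤ ((m:ℝ)+1)/r := by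
    intro i
    by_cases hi : i = Fin.last m
    · subst hi
      have hgl : g (Fin.last m) = ((r:ℝ) - S)/r := by
        simp [hg, hk, Nat.cast_sub hSr']
      have hdiff : b.1 (Fin.last m) - g (Fin.last m) = -∑ j ∈ E, (b.1 j - (f j : ℝ)/r) := by
        rw [hgl, hbE]
        have hScast : (S:ℝ) = ∑ j ∈ E, (f j : ℝ) := by push_cast [hS]; ring
        rw [Finset.sum_sub_distrib, ← Finset.sum_div, ← hScast]
        field_simp
        ring
      have hsnn : 0 ≤ ∑ j ∈ E, (b.1 j - (f j : ℝ)/r) :=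
        Finset.sum_nonneg fun j _ => hlow j
      have hcard : E.card = m := by
        rw [hE, Finset.card_erase_of_mem (Finset.mem_univ _), Finset.card_univ,
          Fintype.card_fin]
        omega
      have hsle : ∑ j ∈ E, (b.1 j - (f j : ℝ)/r) ≤ (m:ℝ)/r := by
        calc ∑ j ∈ E, (b.1 j - (f j : ℝ)/r) ≤ E.card • (1/r) :=
              Finset.sum_le_card_nsmul _ _ _ (fun j _ => hup j)
          _ = (m:ℝ)/r := by rw [hcard]; simp [nsmul_eq_mul]; ring
      rw [hdiff, abs_neg, abs_of_nonneg hsnn]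
      calc ∑ j ∈ E, (b.1 j - (f j : ℝ)/r) ≤ (m:ℝ)/r := hsle
        _ ≤ ((m:ℝ)+1)/r := by gcongr; linarith
    · have hgi : g i = (f i : ℝ)/r := by simp [hg, hk, hi]
      rw [hgi, abs_of_nonneg (hlow i)]
      calc b.1 i - (f i : ℝ)/r ≤ 1/r := hup i
        _ ≤ ((m:ℝ)+1)/r := by
            have hm : (0:ℝ) ≤ (m:ℝ) := Nat.cast_nonneg m
            gcongr <;> linarith
  have hnn : (0:ℝ) ≤ ((m:ℝ)+1)/r := by positivity
  rw [pi_norm_le_iff_of_nonneg hnn]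
  intro i
  simpa [Real.norm_eq_abs] using hmain i

/-- Two beliefs mapped to the same representative belief by a nearest-neighbor
quantization map of resolution `r` are within sup-norm distance `2n/r`. -/
theorem quantization_cell_diameter
    (n r : ℕ) (hn : 1 ≤ n) (hr : 1 ≤ r)
    (Φ : ↥(Simplex n) → ↥(Simplex n)) (hΦ : IsNearestNeighbor n r Φ)
    (b b' : ↥(Simplex n)) (h : Φ b = Φ b') :
    ‖(b : Fin n → ℝ) - (b' : Fin n → ℝ)‖ ≤ 2 * (n : ℝ) / (r : ℝ) := by
  obtain ⟨m, rfl⟩ : ∃ m, n = m + 1 := ⟨n - 1, (Nat.succ_pred_eq_of_pos hn).symm⟩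
  have key : ∀ c : ↥(Simplex (m+1)),
      ‖(c : Fin (m+1) → ℝ) - (Φ c : Fin (m+1) → ℝ)‖ ≤ ((m:ℝ)+1)/r := by
    intro c
    obtain ⟨g, hg, hgle⟩ := exists_grid_close m r hr c
    exact le_trans ((hΦ c).2 g hg) hgle
  have h1 := key b
  have h2 := key b'
  rw [h] at h1
  have htri : ‖(b : Fin (m+1) → ℝ) - (b' : Fin (m+1) → ℝ)‖ ≤
      ‖(b : Fin (m+1) → ℝ) - (Φ b' : Fin (m+1) → ℝ)‖ +
      ‖(b' : Fin (m+1) → ℝ) - (Φ b' : Fin (m+1) → ℝ)‖ := by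
    have := norm_sub_le_norm_sub_add_norm_sub (b : Fin (m+1) → ℝ) (Φ b' : Fin (m+1) → ℝ)
      (b' : Fin (m+1) → ℝ)
    calc ‖(b : Fin (m+1) → ℝ) - (b' : Fin (m+1) → ℝ)‖
        ≤ ‖(b : Fin (m+1) → ℝ) - (Φ b' : Fin (m+1) → ℝ)‖ +
          ‖(Φ b' : Fin (m+1) → ℝ) - (b' : Fin (m+1) → ℝ)‖ := this
      _ = _ := by rw [norm_sub_rev ((Φ b' : Fin (m+1) → ℝ))]
  have : (2:ℝ) * ((m:ℝ)+1) / r = ((m:ℝ)+1)/r + ((m:ℝ)+1)/r := by ring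
  push_cast
  push_cast at h1 h2 htri
  linarith
end

section
/- Let (Θ, 𝒜, μ) be a probability space and let f : Θ → ℝ be measurable with f ≥ 0 pointwise. Let ε > 0 and r₀ > 0 satisfy μ{θ | f θ ≤ ε/2} ≥ r₀. Then for every real t ≥ 1/ε, (∫_{{f ≥ ε}} f·exp(−t·f) dμ) / (∫_{{f ≤ ε/2}} exp(−t·f) dμ) ≤ (ε/r₀)·exp(−t·ε/2). -/
open MeasureTheory

lemma gibbs_pointwise {ε t x : ℝ} (hε : 0 < ε) (ht : 1 / ε ≤ t) (hx : ε ≤ x) :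
    x * Real.exp (-t * x) ≤ ε * Real.exp (-t * ε) := by
  have htε : 1 ≤ ε * t := by
    rw [div_le_iff₀ hε] at ht; linarith [mul_comm t ε]
  have h2 : t * (x - ε) + 1 ≤ Real.exp (t * (x - ε)) := Real.add_one_le_exp _
  have h1 : x ≤ ε * Real.exp (t * (x - ε)) := by
    have := mul_le_mul_of_nonneg_left h2 hε.le
    nlinarith [mul_nonneg (sub_nonneg.2 htε) (sub_nonneg.2 hx)]
  calc x * Real.exp (-t * x) ≤ (ε * Real.exp (t * (x - ε))) * Real.exp (-t * x) :=
        mul_le_mul_of_nonneg_right h1 (Real.exp_pos _).le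
    _ = ε * Real.exp (-t * ε) := by rw [mul_assoc, ← Real.exp_add]; ring_nf

/-- Gibbs-weight concentration bound: for `t ≥ 1/ε`, the mass of
`f·exp(−t·f)` on `{f ≥ ε}` relative to the mass of `exp(−t·f)` on
`{f ≤ ε/2}` is at most `(ε/r₀)·exp(−t·ε/2)`. -/
theorem gibbs_concentration_bound
    {Θ : Type*} [MeasurableSpace Θ] (μ : Measure Θ) [IsProbabilityMeasure μ]
    (f : Θ → ℝ) (hfm : Measurable f) (hf : ∀ θ, 0 ≤ f θ)
    (ε r₀ : ℝ) (hε : 0 < ε) (hr₀ : 0 < r₀)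
    (hμ : ENNReal.ofReal r₀ ≤ μ {θ | f θ ≤ ε / 2})
    (t : ℝ) (ht : 1 / ε ≤ t) :
    (∫ θ in {θ | ε ≤ f θ}, f θ * Real.exp (-t * f θ) ∂μ) /
      (∫ θ in {θ | f θ ≤ ε / 2}, Real.exp (-t * f θ) ∂μ) ≤
      (ε / r₀) * Real.exp (-t * ε / 2) := by
  have ht0 : 0 < t := lt_of_lt_of_le (by positivity) ht
  have hS : MeasurableSet {θ | ε ≤ f θ} := measurableSet_le measurable_const hfm
  have hT : MeasurableSet {θ | f θ ≤ ε / 2} := measurableSet_le hfm measurable_const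
  -- integrabilities
  have hint1 : Integrable (fun θ => f θ * Real.exp (-t * f θ)) μ := by
    apply (integrable_const (1 / t * Real.exp (-1))).mono'
    · exact (hfm.mul ((hfm.const_mul (-t)).exp)).aestronglyMeasurable
    · filter_upwards with θ
      rw [Real.norm_eq_abs, abs_of_nonneg (mul_nonneg (hf θ) (Real.exp_pos _).le)]
      set y := t * f θ with hy
      have h1 : y ≤ Real.exp (y - 1) := by
        have := Real.add_one_le_exp (y - 1); linarith
      have h2 : y * Real.exp (-y) ≤ Real.exp (-1) := by
        calc y * Real.exp (-y) ≤ Real.exp (y - 1) * Real.exp (-y) :=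
              mul_le_mul_of_nonneg_right h1 (Real.exp_pos _).le
          _ = Real.exp (-1) := by rw [← Real.exp_add]; ring_nf
      have hne : -t * f θ = -y := by rw [hy]; ring
      have hfθ : f θ = y / t := by rw [hy]; field_simp
      rw [hne, hfθ]
      calc y / t * Real.exp (-y) = (y * Real.exp (-y)) / t := by ring
        _ ≤ Real.exp (-1) / t := by gcongr
        _ = 1 / t * Real.exp (-1) := by ring
  have hint2 : Integrable (fun θ => Real.exp (-t * f θ)) μ := by
    apply (integrable_const (1:ℝ)).mono'
    · exact ((hfm.const_mul (-t)).exp).aestronglyMeasurable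
    · filter_upwards with θ
      rw [Real.norm_eq_abs, abs_of_pos (Real.exp_pos _)]
      exact Real.exp_le_one_iff.2 (by nlinarith [hf θ])
  -- numerator bound
  have hnum : (∫ θ in {θ | ε ≤ f θ}, f θ * Real.exp (-t * f θ) ∂μ) ≤ ε * Real.exp (-t * ε) := by
    calc (∫ θ in {θ | ε ≤ f θ}, f θ * Real.exp (-t * f θ) ∂μ)
        ≤ ∫ _ in {θ | ε ≤ f θ}, ε * Real.exp (-t * ε) ∂μ := by
          apply setIntegral_mono_on hint1.integrableOn (integrableOn_const (measure_ne_top _ _)) hS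
          intro θ hθ; exact gibbs_pointwise hε ht hθ
      _ = (μ {θ | ε ≤ f θ}).toReal * (ε * Real.exp (-t * ε)) := by
          rw [setIntegral_const, smul_eq_mul]; rfl
      _ ≤ 1 * (ε * Real.exp (-t * ε)) := by
          apply mul_le_mul_of_nonneg_right _ (by positivity)
          have := prob_le_one (μ := μ) (s := {θ | ε ≤ f θ})
          simpa using ENNReal.toReal_mono (by simp) this
      _ = ε * Real.exp (-t * ε) := one_mul _
  -- denominator bound
  have hden : r₀ * Real.exp (-t * (ε / 2)) ≤ ∫ θ in {θ | f θ ≤ ε / 2}, Real.exp (-t * f θ) ∂μ := by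
    have hmeas : r₀ ≤ (μ {θ | f θ ≤ ε / 2}).toReal := by
      have := ENNReal.toReal_mono (measure_ne_top μ _) hμ
      rwa [ENNReal.toReal_ofReal hr₀.le] at this
    calc r₀ * Real.exp (-t * (ε / 2))
        ≤ (μ {θ | f θ ≤ ε / 2}).toReal * Real.exp (-t * (ε / 2)) :=
          mul_le_mul_of_nonneg_right hmeas (Real.exp_pos _).le
      _ = ∫ _ in {θ | f θ ≤ ε / 2}, Real.exp (-t * (ε / 2)) ∂μ := by
          rw [setIntegral_const, smul_eq_mul]; rfl
      _ ≤ ∫ θ in {θ | f θ ≤ ε / 2}, Real.exp (-t * f θ) ∂μ := by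
          apply setIntegral_mono_on (integrableOn_const (measure_ne_top _ _))
            hint2.integrableOn hT
          intro θ hθ
          simp only [Set.mem_setOf_eq] at hθ
          exact Real.exp_le_exp.2 (by nlinarith [mul_le_mul_of_nonneg_left hθ ht0.le])
  have hdpos : 0 < r₀ * Real.exp (-t * (ε / 2)) := by positivity
  have hfinal : (ε * Real.exp (-t * ε)) / (r₀ * Real.exp (-t * (ε / 2)))
      = (ε / r₀) * Real.exp (-t * ε / 2) := by
    rw [show (-t * ε) = (-t * ε / 2) + (-t * (ε / 2)) by ring, Real.exp_add]
    have h := Real.exp_ne_zero (-t * (ε / 2))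
    field_simp
    ring
  calc (∫ θ in {θ | ε ≤ f θ}, f θ * Real.exp (-t * f θ) ∂μ) /
      (∫ θ in {θ | f θ ≤ ε / 2}, Real.exp (-t * f θ) ∂μ)
      ≤ (ε * Real.exp (-t * ε)) / (r₀ * Real.exp (-t * (ε / 2))) :=
        div_le_div₀ (by positivity) hnum hdpos hden
    _ = (ε / r₀) * Real.exp (-t * ε / 2) := hfinal
end

section
/- Let (Θ, 𝒜, μ) be a probability space and let (f_t)_{t ∈ ℕ} be a sequence of measurable functions f_t : Θ → ℝ with f_t ≥ 0 pointwise. Suppose that for every ε > 0 there exists r > 0 such that μ{θ | f_t θ ≤ ε} ≥ r for all t. Then lim_{t → ∞} (∫ f_t·exp(−t·f_t) dμ) / (∫ exp(−t·f_t) dμ) = 0. -/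
open MeasureTheory

lemma aux_mul_exp_neg_le (s x : ℝ) (hs : 0 < s) (hx : 0 ≤ x) :
    x * Real.exp (-(s * x)) ≤ 1 / s := by
  rw [Real.exp_neg, mul_comm, inv_mul_eq_div, div_le_div_iff₀ (Real.exp_pos _) hs]
  have h1 : s * x + 1 ≤ Real.exp (s * x) := Real.add_one_le_exp _
  nlinarith

lemma aux_pointwise_bound (t : ℕ) (ht : 1 ≤ (t : ℝ)) (ε' : ℝ) (hε' : 0 < ε')
    (x : ℝ) (hx : 0 ≤ x) :
    x * Real.exp (-(t : ℝ) * x) ≤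
      ε' * Real.exp (-(t : ℝ) * x) + (2 / (t : ℝ)) * Real.exp (-(t : ℝ) * ε' / 2) := by
  have ht0 : (0 : ℝ) < t := lt_of_lt_of_le one_pos ht
  rcases le_or_gt x ε' with hle | hgt
  · have h2 : 0 ≤ (2 / (t : ℝ)) * Real.exp (-(t : ℝ) * ε' / 2) := by positivity
    nlinarith [Real.exp_pos (-(t : ℝ) * x)]
  · have h1 : x * Real.exp (-((t : ℝ) / 2 * x)) ≤ 2 / t := by
      have := aux_mul_exp_neg_le ((t : ℝ) / 2) x (by positivity) hx
      calc x * Real.exp (-((t : ℝ) / 2 * x)) ≤ 1 / ((t : ℝ) / 2) := this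
        _ = 2 / t := by field_simp
    have hsplit : -(t : ℝ) * x = -((t : ℝ) / 2 * x) + -((t : ℝ) / 2 * x) := by ring
    have h2 : Real.exp (-((t : ℝ) / 2 * x)) ≤ Real.exp (-(t : ℝ) * ε' / 2) := by
      apply Real.exp_le_exp.mpr
      nlinarith
    have h3 : x * Real.exp (-(t : ℝ) * x) ≤ (2 / t) * Real.exp (-(t : ℝ) * ε' / 2) := by
      rw [hsplit, Real.exp_add, ← mul_assoc]
      have hx1 : 0 ≤ x * Real.exp (-((t : ℝ) / 2 * x)) := by positivity
      calc x * Real.exp (-((t : ℝ) / 2 * x)) * Real.exp (-((t : ℝ) / 2 * x))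
          ≤ (2 / t) * Real.exp (-((t : ℝ) / 2 * x)) := by
            apply mul_le_mul_of_nonneg_right h1 (Real.exp_pos _).le
        _ ≤ (2 / t) * Real.exp (-(t : ℝ) * ε' / 2) := by
            apply mul_le_mul_of_nonneg_left h2 (by positivity)
    have h4 : 0 ≤ ε' * Real.exp (-(t : ℝ) * x) := by positivity
    linarith

/-- Abstract posterior-consistency statement: if the prior puts mass at least
`r > 0` (uniformly in `t`) on every sublevel set `{f_t ≤ ε}`, then the
Gibbs-posterior expectation of the discrepancy `f_t` tends to `0`. -/
theorem gibbs_posterior_expectation_tendsto_zero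
    {Θ : Type*} [MeasurableSpace Θ] (μ : Measure Θ) [IsProbabilityMeasure μ]
    (f : ℕ → Θ → ℝ) (hfm : ∀ t, Measurable (f t)) (hf : ∀ t θ, 0 ≤ f t θ)
    (h : ∀ ε : ℝ, 0 < ε → ∃ r : ℝ, 0 < r ∧
      ∀ t : ℕ, ENNReal.ofReal r ≤ μ {θ | f t θ ≤ ε}) :
    Filter.Tendsto
      (fun t : ℕ =>
        (∫ θ, f t θ * Real.exp (-(t : ℝ) * f t θ) ∂μ) /
          (∫ θ, Real.exp (-(t : ℝ) * f t θ) ∂μ))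
      Filter.atTop (nhds 0) := by
  have expm : ∀ t : ℕ, Measurable fun θ => Real.exp (-(t : ℝ) * f t θ) := by
    intro t
    exact (((hfm t).const_mul (-(t : ℝ))).exp)
  have Zint : ∀ t : ℕ, Integrable (fun θ => Real.exp (-(t : ℝ) * f t θ)) μ := by
    intro t
    refine (integrable_const (1 : ℝ)).mono' (expm t).aestronglyMeasurable ?_
    filter_upwards with θ
    rw [Real.norm_eq_abs, abs_of_pos (Real.exp_pos _)]
    have h0 : (0:ℝ) ≤ (t : ℝ) * f t θ := mul_nonneg (Nat.cast_nonneg t) (hf t θ)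
    have : Real.exp (-(t : ℝ) * f t θ) ≤ 1 := by
      apply Real.exp_le_one_iff.mpr
      simp only [neg_mul]
      linarith
    simpa using this
  have Nint : ∀ t : ℕ, 1 ≤ (t : ℝ) →
      Integrable (fun θ => f t θ * Real.exp (-(t : ℝ) * f t θ)) μ := by
    intro t ht
    refine (integrable_const (1 / (t : ℝ))).mono'
      ((hfm t).mul (expm t)).aestronglyMeasurable ?_
    filter_upwards with θ
    rw [Real.norm_eq_abs, abs_of_nonneg (mul_nonneg (hf t θ) (Real.exp_pos _).le)]
    have := aux_mul_exp_neg_le (t : ℝ) (f t θ) (by linarith) (hf t θ)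
    calc f t θ * Real.exp (-(t : ℝ) * f t θ)
        = f t θ * Real.exp (-((t : ℝ) * f t θ)) := by rw [neg_mul]
      _ ≤ 1 / (t : ℝ) := this
    -- norm for constant
  have Zlb : ∀ (t : ℕ) (δ r : ℝ), 0 < δ → 0 < r →
      ENNReal.ofReal r ≤ μ {θ | f t θ ≤ δ} →
      r * Real.exp (-(t : ℝ) * δ) ≤ ∫ θ, Real.exp (-(t : ℝ) * f t θ) ∂μ := by
    intro t δ r hδ hr hμA
    set A := {θ | f t θ ≤ δ} with hAdef
    have hA : MeasurableSet A := measurableSet_le (hfm t) measurable_const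
    have h1 : ∫ θ in A, Real.exp (-(t : ℝ) * f t θ) ∂μ ≤
        ∫ θ, Real.exp (-(t : ℝ) * f t θ) ∂μ :=
      setIntegral_le_integral (Zint t)
        (Filter.Eventually.of_forall fun θ => (Real.exp_pos _).le)
    have h2 : ∫ θ in A, Real.exp (-(t : ℝ) * δ) ∂μ ≤
        ∫ θ in A, Real.exp (-(t : ℝ) * f t θ) ∂μ := by
      apply setIntegral_mono_on (integrableOn_const (measure_ne_top μ A))
        ((Zint t).integrableOn) hA
      intro θ hθ
      apply Real.exp_le_exp.mpr
      have hθ' : f t θ ≤ δ := hθ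
      nlinarith [Nat.cast_nonneg (α := ℝ) t]
    have h3 : ∫ θ in A, Real.exp (-(t : ℝ) * δ) ∂μ =
        (μ A).toReal * Real.exp (-(t : ℝ) * δ) := by
      rw [setIntegral_const, smul_eq_mul, measureReal_def]
    have h4 : r ≤ (μ A).toReal := by
      have := ENNReal.toReal_mono (measure_ne_top μ A) hμA
      rwa [ENNReal.toReal_ofReal hr.le] at this
    have h5 : r * Real.exp (-(t : ℝ) * δ) ≤ (μ A).toReal * Real.exp (-(t : ℝ) * δ) :=
      mul_le_mul_of_nonneg_right h4 (Real.exp_pos _).le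
    linarith [h3 ▸ h2]
  rw [Metric.tendsto_atTop]
  intro ε hε
  obtain ⟨r, hr, hrs⟩ := h (ε / 4) (by linarith)
  obtain ⟨N, hN⟩ := exists_nat_gt (max 1 (4 / (r * ε)))
  refine ⟨N, fun t ht => ?_⟩
  have htN : (N : ℝ) ≤ (t : ℝ) := Nat.cast_le.mpr ht
  have ht1 : 1 ≤ (t : ℝ) := le_trans (le_trans (le_max_left _ _) hN.le) htN
  have htε : 4 / (r * ε) < (t : ℝ) := lt_of_lt_of_le (lt_of_le_of_lt (le_max_right _ _) hN) htN
  have ht0 : (0 : ℝ) < t := by linarith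
  set Z := ∫ θ, Real.exp (-(t : ℝ) * f t θ) ∂μ with hZdef
  set Nt := ∫ θ, f t θ * Real.exp (-(t : ℝ) * f t θ) ∂μ with hNdef
  have hZ : r * Real.exp (-(t : ℝ) * (ε / 4)) ≤ Z :=
    Zlb t (ε / 4) r (by linarith) hr (hrs t)
  have hZpos : 0 < Z := lt_of_lt_of_le (by positivity) hZ
  have hNt : Nt ≤ (ε / 2) * Z + (2 / (t : ℝ)) * Real.exp (-(t : ℝ) * (ε / 2) / 2) := by
    have hib : Integrable (fun θ => (ε / 2) * Real.exp (-(t : ℝ) * f t θ)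
        + (2 / (t : ℝ)) * Real.exp (-(t : ℝ) * (ε / 2) / 2)) μ :=
      ((Zint t).const_mul _).add (integrable_const _)
    have hmono : Nt ≤ ∫ θ, ((ε / 2) * Real.exp (-(t : ℝ) * f t θ)
        + (2 / (t : ℝ)) * Real.exp (-(t : ℝ) * (ε / 2) / 2)) ∂μ := by
      apply integral_mono (Nint t ht1) hib
      intro θ
      exact aux_pointwise_bound t ht1 (ε / 2) (by linarith) (f t θ) (hf t θ)
    rwa [integral_add ((Zint t).const_mul _) (integrable_const _),
      integral_const_mul, integral_const, measureReal_def, measure_univ, ENNReal.toReal_one,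
      one_smul] at hmono
  have hNt0 : 0 ≤ Nt :=
    integral_nonneg fun θ => mul_nonneg (hf t θ) (Real.exp_pos _).le
  rw [Real.dist_eq, sub_zero, abs_of_nonneg (div_nonneg hNt0 hZpos.le)]
  have hexp_eq : Real.exp (-(t : ℝ) * (ε / 2) / 2) = Real.exp (-(t : ℝ) * (ε / 4)) := by
    congr 1; ring
  have key : Nt / Z ≤ ε / 2 + 2 / (r * (t : ℝ)) := by
    rw [div_le_iff₀ hZpos]
    have step : (2 / (t : ℝ)) * Real.exp (-(t : ℝ) * (ε / 2) / 2) ≤ (2 / (r * (t : ℝ))) * Z := by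
      rw [hexp_eq]
      have h6 : (2 / (r * (t : ℝ))) * (r * Real.exp (-(t : ℝ) * (ε / 4)))
          ≤ (2 / (r * (t : ℝ))) * Z :=
        mul_le_mul_of_nonneg_left hZ (by positivity)
      have h7 : (2 / (r * (t : ℝ))) * (r * Real.exp (-(t : ℝ) * (ε / 4)))
          = (2 / (t : ℝ)) * Real.exp (-(t : ℝ) * (ε / 4)) := by
        field_simp
      linarith [h7 ▸ h6]
    calc Nt ≤ (ε / 2) * Z + (2 / (t : ℝ)) * Real.exp (-(t : ℝ) * (ε / 2) / 2) := hNt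
      _ ≤ (ε / 2) * Z + (2 / (r * (t : ℝ))) * Z := by linarith
      _ = (ε / 2 + 2 / (r * (t : ℝ))) * Z := by ring
  have hsmall : 2 / (r * (t : ℝ)) < ε / 2 := by
    rw [div_lt_iff₀ (by positivity)]
    have h8 : 4 < (t : ℝ) * (r * ε) := (div_lt_iff₀ (by positivity)).mp htε
    nlinarith
  linarith
end

section
/- Let Θ and N be compact metric spaces with Θ nonempty, let f : Θ × N → ℝ be continuous with f ≥ 0, and suppose that for every ν ∈ N there exists θ ∈ Θ with f(θ, ν) = 0. Let μ be a finite Borel measure on Θ with full support (μ U > 0 for every nonempty open U ⊆ Θ). Then for every m > 0 there exists r > 0 such that μ{θ | f(θ, ν) ≤ m} ≥ r for every ν ∈ N. -/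
open MeasureTheory

/-- Uniform positive prior mass on sublevel sets: if `f` is a continuous
nonnegative discrepancy on a compact product, vanishing somewhere in `Θ` for
every `ν`, and `μ` is a finite Borel measure on `Θ` with full support, then
the sublevel sets `{θ | f (θ, ν) ≤ m}` have measure bounded below uniformly
in `ν`. -/
theorem uniform_mass_of_sublevel_sets
    {Θ N : Type*} [MetricSpace Θ] [CompactSpace Θ] [Nonempty Θ]
    [MetricSpace N] [CompactSpace N]
    [MeasurableSpace Θ] [BorelSpace Θ]
    (f : Θ × N → ℝ) (hfc : Continuous f) (hf : ∀ q, 0 ≤ f q)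
    (hzero : ∀ ν : N, ∃ θ : Θ, f (θ, ν) = 0)
    (μ : Measure Θ) [IsFiniteMeasure μ]
    (hsupp : ∀ U : Set Θ, IsOpen U → U.Nonempty → 0 < μ U) :
    ∀ m : ℝ, 0 < m → ∃ r : ℝ, 0 < r ∧
      ∀ ν : N, ENNReal.ofReal r ≤ μ {θ | f (θ, ν) ≤ m} := by
  intro m hm
  rcases isEmpty_or_nonempty N with hN | hN
  · exact ⟨1, one_pos, fun ν => (IsEmpty.false ν).elim⟩
  have key : ∀ ν0 : N, ∃ (θ0 : Θ) (ε : ℝ), 0 < ε ∧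
      ∀ ν ∈ Metric.ball ν0 ε, ∀ θ ∈ Metric.ball θ0 ε, f (θ, ν) ≤ m := by
    intro ν0
    obtain ⟨θ0, hθ0⟩ := hzero ν0
    have hU : IsOpen (f ⁻¹' Set.Iio m) := isOpen_Iio.preimage hfc
    have hmem : (θ0, ν0) ∈ f ⁻¹' Set.Iio m := by simp [hθ0, hm]
    obtain ⟨ε, hε, hball⟩ := Metric.isOpen_iff.1 hU _ hmem
    refine ⟨θ0, ε, hε, fun ν hν θ hθ => ?_⟩
    have hmemb : (θ, ν) ∈ Metric.ball (θ0, ν0) ε := by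
      rw [Metric.mem_ball, Prod.dist_eq]
      exact max_lt (Metric.mem_ball.1 hθ) (Metric.mem_ball.1 hν)
    exact (hball hmemb).le
  choose θ0 ε hε hkey using key
  obtain ⟨t, ht⟩ := (isCompact_univ (X := N)).elim_finite_subcover
    (fun ν0 => Metric.ball ν0 (ε ν0)) (fun _ => Metric.isOpen_ball)
    (fun ν _ => Set.mem_iUnion.2 ⟨ν, Metric.mem_ball_self (hε ν)⟩)
  have htne : t.Nonempty := by
    obtain ⟨ν⟩ := hN
    obtain ⟨i, hi, _⟩ := Set.mem_iUnion₂.1 (ht (Set.mem_univ ν))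
    exact ⟨i, hi⟩
  set g : N → ℝ := fun ν0 => (μ (Metric.ball (θ0 ν0) (ε ν0))).toReal with hg
  have hgpos : ∀ ν0, 0 < g ν0 := fun ν0 =>
    ENNReal.toReal_pos
      (hsupp _ Metric.isOpen_ball ⟨_, Metric.mem_ball_self (hε ν0)⟩).ne'
      (measure_ne_top μ _)
  refine ⟨t.inf' htne g, ?_, ?_⟩
  · exact (Finset.lt_inf'_iff htne).2 fun b _ => hgpos b
  · intro ν
    obtain ⟨ν1, hν1t, hν1⟩ := Set.mem_iUnion₂.1 (ht (Set.mem_univ ν))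
    calc ENNReal.ofReal (t.inf' htne g)
        ≤ ENNReal.ofReal (g ν1) := ENNReal.ofReal_le_ofReal (Finset.inf'_le _ hν1t)
      _ = μ (Metric.ball (θ0 ν1) (ε ν1)) := ENNReal.ofReal_toReal (measure_ne_top μ _)
      _ ≤ μ {θ | f (θ, ν) ≤ m} := measure_mono fun θ hθ => hkey ν1 ν hν1 θ hθ
end
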